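/- Let V be a finite-dimensional real vector space and (A_{n,1})_{n≥1} a sequence of (n+1)-multilinear maps V^{n+1} → V, each symmetric in the first n arguments, such that x ▷ y := y + Σ_{n≥1} A_{n,1}(x,...,x,y) converges. Then ▷ satisfies the self-distributivity x ▷ (y ▷ z) = (x ▷ y) ▷ (x ▷ z) for all x,y,z if and only if for all p,q ≥ 1 and all x,y,z: A_{p,1}(x,A_{q,1}(y,z)) = Σ_{s_1+...+s_q+k=p} A_{q,1}(A_{s_1,1}(x,y),...,A_{s_q,1}(x,y),A_{k,1}(x,z)), where A_{r,1}(x,y) abbreviates A_{r,1}(x,...,x,y), A_{0,1}(x,y):=y, and the sum runs over nonnegative integers s_1,...,s_q,k with s_1+...+s_q+k=p. -/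

import Mathlib

/-!
Write `x ▷ y = Σₙ A_{n,1}(x,…,x,y)` with `A_{0,1}(x,y) = y`. For fixed `x` this is a sum of
linear maps in `y`, hence linear, and continuous since `V` is finite-dimensional. Replacing `y`
by `s • y` and comparing coefficients of the power series in `s`, self-distributivity becomes:
`x ▷ -` commutes with every `A_{k,1}`, i.e. `x ▷ A_{k,1}(y,z) = A_{k,1}(x ▷ y, x ▷ z)`.
Expanding the right-hand side multilinearly, regrouping by total degree in `x`, and now replacing
`x` by `s • x`, the coefficient of `s^p` gives the stated identity.
-/

/-- `adiag A n x y = A_{n,1}(x,…,x,y)`: the diagonal evaluation of the `n+1`-multilinear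
map `A n` on `n` copies of `x` and one `y`. -/
def adiag {V : Type*} [AddCommGroup V] [Module ℝ V]
    (A : (n : ℕ) → MultilinearMap ℝ (fun _ : Fin (n + 1) => V) V)
    (n : ℕ) (x y : V) : V :=
  A n (Fin.snoc (fun _ => x) y)

open Filter Topology Finset

theorem coeffs_eq_of_hasSum_pow_smul {𝕜 E : Type*} [NontriviallyNormedField 𝕜]
    [NormedAddCommGroup E] [NormedSpace 𝕜 E] {f : 𝕜 → E} {a b : ℕ → E}
    (ha : ∀ s : 𝕜, HasSum (fun n => s ^ n • a n) (f s))
    (hb : ∀ s : 𝕜, HasSum (fun n => s ^ n • b n) (f s)) : a = b := by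
  let series (c : ℕ → E) : FormalMultilinearSeries 𝕜 𝕜 E := fun n =>
    ContinuousMultilinearMap.mkPiRing 𝕜 (Fin n) (c n)
  have hasFPowerSeriesAt (c : ℕ → E)
      (hc : ∀ s : 𝕜, HasSum (fun n => s ^ n • c n) (f s)) :
      HasFPowerSeriesAt f (series c) 0 := by
    refine ⟨1, { r_le := ?_, r_pos := one_pos, hasSum := fun {y} _ => ?_ }⟩
    · refine (series c).le_radius_of_tendsto (l := 0) ?_
      simpa [series] using (hc 1).summable.tendsto_atTop_zero.norm
    · simpa [series] using hc y
  funext n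
  simpa [series, FormalMultilinearSeries.coeff] using congrArg (fun p => p.coeff n)
    ((hasFPowerSeriesAt a ha).eq_formalMultilinearSeries (hasFPowerSeriesAt b hb))

theorem MultilinearMap.continuous_of_finiteDimensional {𝕜 ι F : Type*}
    [NontriviallyNormedField 𝕜] [CompleteSpace 𝕜] [Fintype ι] {E : ι → Type*}
    [∀ i, NormedAddCommGroup (E i)] [∀ i, NormedSpace 𝕜 (E i)] [∀ i, FiniteDimensional 𝕜 (E i)]
    [NormedAddCommGroup F] [NormedSpace 𝕜 F] (f : MultilinearMap 𝕜 E F) : Continuous f := by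
  classical
  let b i := Module.finBasis 𝕜 (E i)
  have expand : ⇑f = fun m => ∑ t : (i : ι) → Fin (Module.finrank 𝕜 (E i)),
      (∏ i, (b i).equivFunL (m i) (t i)) • f fun i => b i (t i) := by
    funext m
    conv_lhs => rw [← funext fun i => (b i).sum_equivFun (m i)]
    rw [f.map_sum]
    simp_rw [f.map_smul_univ]
    rfl
  rw [expand]
  fun_prop

theorem summable_pi_prod_of_nonneg {β : Type*} :
    ∀ {n : ℕ} {u : Fin n → β → ℝ}, (∀ i j, 0 ≤ u i j) → (∀ i, Summable (u i)) →
      Summable fun t : Fin n → β => ∏ i, u i (t i)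
  | 0, _, _, _ => Summable.of_finite
  | n + 1, u, hu, hsum => by
    have htail := summable_pi_prod_of_nonneg (u := fun i => u i.succ) (fun _ _ => hu _ _)
      fun i => hsum i.succ
    have hpair := (hsum 0).mul_of_nonneg htail (hu 0) fun _ => prod_nonneg fun _ _ => hu _ _
    refine (Fin.consEquiv fun _ => β).summable_iff.1 (hpair.congr fun _ => ?_)
    simp [Fin.prod_univ_succ]

theorem ContinuousMultilinearMap.hasSum_apply_tsum {𝕜 F : Type*} [NontriviallyNormedField 𝕜]
    {k : ℕ} {E : Fin k → Type*} [∀ i, NormedAddCommGroup (E i)] [∀ i, NormedSpace 𝕜 (E i)]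
    [∀ i, CompleteSpace (E i)] [NormedAddCommGroup F] [NormedSpace 𝕜 F] [CompleteSpace F]
    (M : ContinuousMultilinearMap 𝕜 E F) {f : (i : Fin k) → ℕ → E i}
    (hf : ∀ i, Summable fun j => ‖f i j‖) :
    HasSum (fun t : Fin k → ℕ => M fun i => f i (t i)) (M fun i => ∑' j, f i j) := by
  classical
  have hsum : Summable fun t : Fin k → ℕ => M fun i => f i (t i) :=
    .of_norm_bounded ((summable_pi_prod_of_nonneg (fun _ _ => norm_nonneg _) hf).mul_left ‖M‖)
      fun t => M.le_opNorm _
  let box (N : ℕ) : Finset (Fin k → ℕ) := Fintype.piFinset fun _ => range N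
  have hbox : Tendsto box atTop atTop := by
    refine tendsto_atTop_finset_of_monotone
      (fun N N' h => Fintype.piFinset_subset _ _ fun _ => range_subset_range.2 h) fun t => ?_
    refine ⟨univ.sup t + 1, Fintype.mem_piFinset.2 fun i => mem_range.2 ?_⟩
    exact Nat.lt_succ_of_le (le_sup (mem_univ i))
  have hpartial : Tendsto (fun N => ∑ t ∈ box N, M fun i => f i (t i)) atTop
      (𝓝 (M fun i => ∑' j, f i j)) := by
    simp_rw [box, ← M.map_sum_finset]
    exact (M.cont.tendsto _).comp
      (tendsto_pi_nhds.2 fun i => (hf i).of_norm.hasSum.tendsto_sum_nat)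
  exact tendsto_nhds_unique (hsum.hasSum.comp hbox) hpartial ▸ hsum.hasSum

theorem HasSum.sum_antidiagonalTuple {E : Type*} [NormedAddCommGroup E] [CompleteSpace E] {k : ℕ}
    {c : (Fin k → ℕ) → E} {S : E} (h : HasSum c S) :
    HasSum (fun p => ∑ t ∈ Nat.antidiagonalTuple k p, c t) S := by
  refine (h.tsum_fiberwise fun t => ∑ i, t i).congr_fun fun p => ?_
  have hfiber :
      (fun t : Fin k → ℕ => ∑ i, t i) ⁻¹' {p} = ↑(Nat.antidiagonalTuple k p) := by
    ext t
    simp [Nat.mem_antidiagonalTuple]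
  rw [hfiber, Finset.tsum_subtype']

section Rack

variable {V : Type*} [NormedAddCommGroup V] [NormedSpace ℝ V]
  (A : (n : ℕ) → MultilinearMap ℝ (fun _ : Fin (n + 1) => V) V)

theorem adiag_zero (hA0 : ∀ v : Fin 1 → V, A 0 v = v 0) (x y : V) : adiag A 0 x y = y := by
  simp [adiag, hA0, Fin.snoc]

theorem adiag_eq_toLinearMap (n : ℕ) (x y : V) :
    adiag A n x y = (A n).toLinearMap (Fin.snoc (fun _ => x) 0) (Fin.last n) y := by
  classical
  rw [MultilinearMap.toLinearMap_apply, Fin.update_snoc_last, adiag]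

theorem adiag_smul_left (n : ℕ) (s : ℝ) (x y : V) :
    adiag A n (s • x) y = s ^ n • adiag A n x y := by
  have hsnoc : (Fin.snoc (fun _ => s • x) y : Fin (n + 1) → V) =
      fun i => (Fin.snoc (fun _ => s) 1 : Fin (n + 1) → ℝ) i • Fin.snoc (fun _ => x) y i := by
    funext i
    refine Fin.lastCases ?_ (fun j => ?_) i <;> simp
  rw [adiag, hsnoc, (A n).map_smul_univ, Fin.prod_univ_castSucc]
  simp [adiag]

/-- The part of degree `p` in `x` of `A_{q,1}(x ▷ y, …, x ▷ y, x ▷ z)`. -/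
def adiagComp (q p : ℕ) (x y z : V) : V :=
  ∑ t ∈ Nat.antidiagonalTuple (q + 1) p,
    A q (Fin.snoc (fun i : Fin q => adiag A (t i.castSucc) x y) (adiag A (t (Fin.last q)) x z))

theorem adiagComp_zero (hA0 : ∀ v : Fin 1 → V, A 0 v = v 0) (q : ℕ) (x y z : V) :
    adiagComp A q 0 x y z = adiag A q y z := by
  rw [adiagComp, Nat.antidiagonalTuple_zero_right, sum_singleton]
  simp only [Pi.zero_apply, adiag_zero A hA0]
  rfl

theorem adiagComp_smul (q p : ℕ) (s : ℝ) (x y z : V) :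
    adiagComp A q p (s • x) y z = s ^ p • adiagComp A q p x y z := by
  rw [adiagComp, adiagComp, smul_sum]
  refine sum_congr rfl fun t ht => ?_
  have hsnoc : (Fin.snoc (fun i : Fin q => adiag A (t i.castSucc) (s • x) y)
      (adiag A (t (Fin.last q)) (s • x) z) : Fin (q + 1) → V) = fun i => s ^ t i •
        (Fin.snoc (fun i : Fin q => adiag A (t i.castSucc) x y) (adiag A (t (Fin.last q)) x z) :
          Fin (q + 1) → V) i := by
    funext i
    refine Fin.lastCases ?_ (fun j => ?_) i <;> simp [adiag_smul_left]
  rw [hsnoc, (A q).map_smul_univ, prod_pow_eq_pow_sum, (Nat.mem_antidiagonalTuple.1 ht)]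

end Rack

section Operation

variable {V : Type*} [NormedAddCommGroup V] [NormedSpace ℝ V]
  {A : (n : ℕ) → MultilinearMap ℝ (fun _ : Fin (n + 1) => V) V} {op : V → V → V}

theorem hasSum_pow_smul_adiag (hop : ∀ x y, HasSum (fun n => adiag A n x y) (op x y)) (s : ℝ)
    (x y : V) : HasSum (fun n => s ^ n • adiag A n x y) (op (s • x) y) :=
  (hop (s • x) y).congr_fun fun n => (adiag_smul_left A n s x y).symm

variable [FiniteDimensional ℝ V]

noncomputable def leftOpCLM (hop : ∀ x y, HasSum (fun n => adiag A n x y) (op x y)) (x : V) :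
    V →L[ℝ] V :=
  LinearMap.toContinuousLinearMap
    { toFun := op x
      map_add' := fun w w' => (hop x (w + w')).unique <| by
        simpa only [adiag_eq_toLinearMap, map_add] using (hop x w).add (hop x w')
      map_smul' := fun c w => (hop x (c • w)).unique <| by
        simpa only [adiag_eq_toLinearMap, map_smul, RingHom.id_apply] using (hop x w).const_smul c }

theorem leftOpCLM_apply (hop : ∀ x y, HasSum (fun n => adiag A n x y) (op x y)) (x y : V) :
    leftOpCLM hop x y = op x y :=
  rfl

theorem hasSum_adiagComp (hop : ∀ x y, HasSum (fun n => adiag A n x y) (op x y)) (q : ℕ)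
    (x y z : V) : HasSum (fun p => adiagComp A q p x y z) (adiag A q (op x y) (op x z)) := by
  let f : Fin (q + 1) → ℕ → V := Fin.snoc (fun _ n => adiag A n x y) fun n => adiag A n x z
  have hf : ∀ i, Summable fun n => ‖f i n‖ := by
    refine Fin.lastCases ?_ fun i => ?_
    · simpa [f, summable_norm_iff] using (hop x z).summable
    · simpa [f, summable_norm_iff] using (hop x y).summable
  have happly (t : Fin (q + 1) → ℕ) : (fun i => f i (t i)) =
      Fin.snoc (fun i => adiag A (t i.castSucc) x y) (adiag A (t (Fin.last q)) x z) := by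
    funext i
    refine Fin.lastCases ?_ (fun j => ?_) i <;> simp [f]
  have htsum : (fun i => ∑' n, f i n) = Fin.snoc (fun _ => op x y) (op x z) := by
    funext i
    refine Fin.lastCases ?_ (fun j => ?_) i
    · simpa [f] using (hop x z).tsum_eq
    · simpa [f] using (hop x y).tsum_eq
  have h := (⟨A q, (A q).continuous_of_finiteDimensional⟩ :
    ContinuousMultilinearMap ℝ (fun _ : Fin (q + 1) => V) V).hasSum_apply_tsum hf
  simp only [happly, htsum] at h
  exact h.sum_antidiagonalTuple

theorem selfDistrib_iff_forall_op_adiag (hop : ∀ x y, HasSum (fun n => adiag A n x y) (op x y)) :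
    (∀ x y z, op x (op y z) = op (op x y) (op x z)) ↔
      ∀ k x y z, op x (adiag A k y z) = adiag A k (op x y) (op x z) := by
  have hmap (x y z : V) : HasSum (fun n => op x (adiag A n y z)) (op x (op y z)) :=
    (hop y z).mapL (leftOpCLM hop x)
  constructor
  · intro hsd k x y z
    refine congrFun (coeffs_eq_of_hasSum_pow_smul (f := fun s : ℝ => op x (op (s • y) z))
      (a := fun n => op x (adiag A n y z)) (b := fun n => adiag A n (op x y) (op x z))
      (fun s => ?_) fun s => ?_) k
    · refine (hmap x (s • y) z).congr_fun fun n => ?_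
      rw [adiag_smul_left]
      exact (map_smul (leftOpCLM hop x) _ _).symm
    · rw [hsd, ← leftOpCLM_apply hop x (s • y), map_smul, leftOpCLM_apply]
      exact hasSum_pow_smul_adiag hop s (op x y) (op x z)
  · intro h x y z
    exact (hmap x y z).unique ((hop (op x y) (op x z)).congr_fun fun n => h n x y z)

theorem op_adiag_eq_iff_adiag_adiag_eq (hop : ∀ x y, HasSum (fun n => adiag A n x y) (op x y))
    (q : ℕ) : (∀ x y z, op x (adiag A q y z) = adiag A q (op x y) (op x z)) ↔
      ∀ p x y z, adiag A p x (adiag A q y z) = adiagComp A q p x y z := by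
  constructor
  · intro h p x y z
    refine congrFun (coeffs_eq_of_hasSum_pow_smul (f := fun s : ℝ => op (s • x) (adiag A q y z))
      (b := fun p => adiagComp A q p x y z)
      (fun s => hasSum_pow_smul_adiag hop s x _) fun s => ?_) p
    rw [h]
    exact (hasSum_adiagComp hop q (s • x) y z).congr_fun fun p =>
      (adiagComp_smul A q p s x y z).symm
  · intro h x y z
    exact (hop x _).unique ((hasSum_adiagComp hop q x y z).congr_fun fun p => h p x y z)

end Operation

theorem stmt_6_general {V : Type*} [NormedAddCommGroup V] [NormedSpace ℝ V] [FiniteDimensional ℝ V]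
    (A : (n : ℕ) → MultilinearMap ℝ (fun _ : Fin (n + 1) => V) V)
    (hA0 : ∀ v : Fin 1 → V, A 0 v = v 0)
    (hconv : ∀ x y : V, Summable fun n => adiag A (n + 1) x y)
    (op : V → V → V)
    (hop : ∀ x y : V, op x y = y + ∑' n : ℕ, adiag A (n + 1) x y) :
    (∀ x y z : V, op x (op y z) = op (op x y) (op x z)) ↔
      (∀ p q : ℕ, 1 ≤ p → 1 ≤ q → ∀ x y z : V,
        adiag A p x (adiag A q y z) =
          ∑ t ∈ Finset.Nat.antidiagonalTuple (q + 1) p,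
            A q (Fin.snoc (fun i : Fin q => adiag A (t i.castSucc) x y)
              (adiag A (t (Fin.last q)) x z))) := by
  have hasSum_op (x y : V) : HasSum (fun n => adiag A n x y) (op x y) := by
    have h := HasSum.zero_add (f := fun n => adiag A n x y) (hconv x y).hasSum
    rwa [adiag_zero A hA0, ← hop] at h
  rw [selfDistrib_iff_forall_op_adiag hasSum_op]
  constructor
  · intro h p q _ _
    exact (op_adiag_eq_iff_adiag_adiag_eq hasSum_op q).1 (h q) p
  · intro h q
    rcases Nat.eq_zero_or_pos q with rfl | hq
    · simp [adiag_zero A hA0]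
    refine (op_adiag_eq_iff_adiag_adiag_eq hasSum_op q).2 fun p x y z => ?_
    rcases Nat.eq_zero_or_pos p with rfl | hp
    · rw [adiag_zero A hA0, adiagComp_zero A hA0]
    · exact h p q hp hq x y z

/-- Let `(A_{n,1})` be multilinear maps, symmetric in the first `n` arguments, with
`A_{0,1}(x,y) = y`, such that `x ▷ y := y + Σ_{n ≥ 1} A_{n,1}(x,…,x,y)` converges. Then
`▷` is left self-distributive iff for all `p, q ≥ 1`,
`A_{p,1}(x, A_{q,1}(y,z)) = Σ_{s₁+⋯+s_q+k=p} A_{q,1}(A_{s₁,1}(x,y),…,A_{s_q,1}(x,y), A_{k,1}(x,z))`. -/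
theorem stmt_6 {V : Type*} [NormedAddCommGroup V] [NormedSpace ℝ V] [FiniteDimensional ℝ V]
    (A : (n : ℕ) → MultilinearMap ℝ (fun _ : Fin (n + 1) => V) V)
    (hA0 : ∀ v : Fin 1 → V, A 0 v = v 0)
    (hsymm : ∀ (n : ℕ) (x : Fin n → V) (y : V) (σ : Equiv.Perm (Fin n)),
      A n (Fin.snoc (x ∘ σ) y) = A n (Fin.snoc x y))
    (hconv : ∀ x y : V, Summable fun n => adiag A (n + 1) x y)
    (op : V → V → V)
    (hop : ∀ x y : V, op x y = y + ∑' n : ℕ, adiag A (n + 1) x y) :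
    (∀ x y z : V, op x (op y z) = op (op x y) (op x z)) ↔
      (∀ p q : ℕ, 1 ≤ p → 1 ≤ q → ∀ x y z : V,
        adiag A p x (adiag A q y z) =
          ∑ t ∈ Finset.Nat.antidiagonalTuple (q + 1) p,
            A q (Fin.snoc (fun i : Fin q => adiag A (t i.castSucc) x y)
              (adiag A (t (Fin.last q)) x z))) :=
  stmt_6_general A hA0 hconv op hop
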